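/- Let ρ_W(p) = (1−p)·I₄/4 + p·|φ⟩⟨φ| be the two-qubit Werner state, where |φ⟩ = (|00⟩ + |11⟩)/√2 and p ∈ [0,1]. Then the equation tr(ρ_W(p)²) = tr((tr_B ρ_W(p))²) + 4·√(det ρ_W(p)) holds if and only if p = 2/3; moreover, ρ_W(p) admits a symmetric extension if and only if p ≤ 2/3. -/

import Mathlib

open Matrix Kronecker Complex
open scoped ComplexOrder

abbrev Q2 : Type := Fin 2 × Fin 2
abbrev Q3 : Type := Fin 2 × Fin 2 × Fin 2

noncomputable section

/-- A two-qubit state: positive semidefinite with trace one. -/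
def IsState2 (ρ : Matrix Q2 Q2 ℂ) : Prop := ρ.PosSemidef ∧ ρ.trace = 1

/-- A three-qubit state: positive semidefinite with trace one. -/
def IsState3 (ρ : Matrix Q3 Q3 ℂ) : Prop := ρ.PosSemidef ∧ ρ.trace = 1

/-- Partial trace over the first qubit (system A) of a two-qubit operator. -/
def ptraceA (ρ : Matrix Q2 Q2 ℂ) : Matrix (Fin 2) (Fin 2) ℂ :=
  Matrix.of fun b b' => ∑ a, ρ (a, b) (a, b')

/-- Partial trace over the middle qubit (system B) of a three-qubit operator;
the result is indexed by the systems (A, B'). -/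
def ptraceB3 (ρ : Matrix Q3 Q3 ℂ) : Matrix Q2 Q2 ℂ :=
  Matrix.of fun p q => ∑ b, ρ (p.1, b, p.2) (q.1, b, q.2)

/-- Partial trace over the last qubit (system B') of a three-qubit operator;
the result is indexed by the systems (A, B). -/
def ptraceB'3 (ρ : Matrix Q3 Q3 ℂ) : Matrix Q2 Q2 ℂ :=
  Matrix.of fun p q => ∑ c, ρ (p.1, p.2, c) (q.1, q.2, c)

/-- A two-qubit state admits a symmetric extension if there is a three-qubit state whose
AB and AB' marginals both equal it. -/
def SymExt (ρ : Matrix Q2 Q2 ℂ) : Prop :=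
  ∃ τ : Matrix Q3 Q3 ℂ, IsState3 τ ∧ ptraceB'3 τ = ρ ∧ ptraceB3 τ = ρ

/-- f(ρ) = tr(ρ_B²) − tr(ρ²) + 4√(det ρ). -/
def fC (ρ : Matrix Q2 Q2 ℂ) : ℝ :=
  ((ptraceA ρ * ptraceA ρ).trace).re - ((ρ * ρ).trace).re + 4 * Real.sqrt ρ.det.re

/-- The rank-one projector |ψ⟩⟨ψ|. -/
def proj {n : Type*} (ψ : n → ℂ) : Matrix n n ℂ := Matrix.vecMulVec ψ (star ψ)

/-- A two-qubit state admits a pure symmetric extension. -/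
def PureSymExt (ρ : Matrix Q2 Q2 ℂ) : Prop :=
  ∃ ψ : Q3 → ℂ, (∑ x, Complex.normSq (ψ x)) = 1 ∧
    ptraceB'3 (proj ψ) = ρ ∧ ptraceB3 (proj ψ) = ρ

/-- The multiset of nonzero eigenvalues (with multiplicity) of a complex matrix. -/
def nonzeroSpec {n : Type*} [Fintype n] [DecidableEq n] (M : Matrix n n ℂ) : Multiset ℂ :=
  M.charpoly.roots.filter (· ≠ 0)

/-- The trace norm ‖X‖_tr = tr √(X†X) of a 2×2 complex matrix. -/
def trNorm (X : Matrix (Fin 2) (Fin 2) ℂ) : ℝ :=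
  (((Matrix.posSemidef_conjTranspose_mul_self X).1.eigenvectorUnitary.1 *
      diagonal (((↑) : ℝ → ℂ) ∘ (√·) ∘ (Matrix.posSemidef_conjTranspose_mul_self X).1.eigenvalues) *
      (star (Matrix.posSemidef_conjTranspose_mul_self X).1.eigenvectorUnitary :
        Matrix (Fin 2) (Fin 2) ℂ)).trace).re

/-- The supporting-hyperplane observable H_AB(σ) = √(det σ)·σ⁻¹ − σ + I₂⊗σ_B. -/
def HAB (σ : Matrix Q2 Q2 ℂ) : Matrix Q2 Q2 ℂ :=
  ((Real.sqrt σ.det.re : ℝ) : ℂ) • σ⁻¹ - σ + (1 : Matrix (Fin 2) (Fin 2) ℂ) ⊗ₖ ptraceA σ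

/-- The Bell state (|00⟩ + |11⟩)/√2. -/
def phiBell : Q2 → ℂ := fun p => if p.1 = p.2 then (((Real.sqrt 2)⁻¹ : ℝ) : ℂ) else 0

/-- The two-qubit Werner state ρ_W(p) = (1−p)·I/4 + p·|φ⟩⟨φ|. -/
def werner (p : ℝ) : Matrix Q2 Q2 ℂ :=
  (((1 - p) / 4 : ℝ) : ℂ) • (1 : Matrix Q2 Q2 ℂ) + (p : ℂ) • proj phiBell

/-- Partial trace over the second qubit (system B) of a two-qubit operator. -/
def ptraceB2 (ρ : Matrix Q2 Q2 ℂ) : Matrix (Fin 2) (Fin 2) ℂ :=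
  Matrix.of fun a a' => ∑ b, ρ (a, b) (a', b)

/-!
With `X = |01⟩⟨01| + |10⟩⟨10| - |00⟩⟨11| - |11⟩⟨00|` one has `tr (X ρ_W(p)) = (1 - 3p) / 2`,
while `I + X_{AB} + X_{AB'}` is a nonnegative combination of six operators `|v⟩⟨v|` on three
qubits. Hence a symmetric extension `τ` of `ρ_W(p)` gives
`0 ≤ tr ((I + X_{AB} + X_{AB'}) τ) = 1 + 2 tr (X ρ_W(p)) = 2 - 3p`. Conversely, at `p = 2/3`
the state `(|ψ₁⟩⟨ψ₁| + |ψ₂⟩⟨ψ₂|) / 12` with `ψ₁ = 2|000⟩ + |101⟩ + |110⟩` and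
`ψ₂ = 2|111⟩ + |010⟩ + |001⟩` is a symmetric extension, and mixing it with `I/8` handles `p < 2/3`.

For the purity identity, `tr ρ_W² = (1 + 3p²)/4`, `tr ρ_A² = 1/2` and
`det ρ_W = (1 - p)³(1 + 3p)/256`, so it reads `√((1 - p)³(1 + 3p)) = 3p² - 1`; squaring leaves
`4p³(3p - 2) = 0`, and `p = 0` violates the sign condition.
-/

lemma proj_phiBell_apply (x y : Q2) :
    proj phiBell x y = if x.1 = x.2 ∧ y.1 = y.2 then 1 / 2 else 0 := by
  have hsqrt : ((√2 : ℝ) : ℂ)⁻¹ * ((√2 : ℝ) : ℂ)⁻¹ = 1 / 2 := by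
    rw [← mul_inv, ← Complex.ofReal_mul, Real.mul_self_sqrt zero_le_two]; norm_num
  simp only [proj, phiBell, vecMulVec_apply, Pi.star_apply]
  split_ifs <;> simp_all

lemma werner_apply (p : ℝ) (x y : Q2) : werner p x y =
    (if x = y then (((1 - p) / 4 : ℝ) : ℂ) else 0) +
      (if x.1 = x.2 ∧ y.1 = y.2 then (p / 2 : ℂ) else 0) := by
  simp only [werner, Matrix.add_apply, Matrix.smul_apply, one_apply, proj_phiBell_apply]
  split_ifs <;> simp <;> ring

lemma trace_werner_mul_self (p : ℝ) :
    (werner p * werner p).trace = ((1 + 3 * p ^ 2) / 4 : ℝ) := by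
  simp only [trace, diag, mul_apply, Fintype.sum_prod_type, Fin.sum_univ_two, werner_apply]
  norm_num
  ring

lemma ptraceB2_werner (p : ℝ) : ptraceB2 (werner p) = (1 / 2 : ℂ) • 1 := by
  ext a b
  fin_cases a <;> fin_cases b <;> simp [ptraceB2, werner_apply] <;> ring

lemma det_werner (p : ℝ) : (werner p).det = ((1 - p) ^ 3 * (1 + 3 * p) / 256 : ℝ) := by
  rw [← det_reindex_self finProdFinEquiv, det_succ_row_zero]
  simp [Fin.sum_univ_succ, det_fin_three, werner_apply, finProdFinEquiv, Prod.ext_iff,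
    Fin.ext_iff, Fin.succAbove, Fin.divNat, Fin.modNat]
  ring

lemma sqrt_eq_three_mul_sq_sub_one_iff {p : ℝ} (hp0 : 0 ≤ p) (hp1 : p ≤ 1) :
    √((1 - p) ^ 3 * (1 + 3 * p)) = 3 * p ^ 2 - 1 ↔ p = 2 / 3 := by
  constructor
  · intro h
    have hpos : 0 ≤ 3 * p ^ 2 - 1 := h ▸ Real.sqrt_nonneg _
    have hsq : (1 - p) ^ 3 * (1 + 3 * p) = (3 * p ^ 2 - 1) ^ 2 := by
      rw [← h, Real.sq_sqrt (mul_nonneg (pow_nonneg (by linarith) 3) (by linarith))]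
    have hp : p ≠ 0 := by rintro rfl; norm_num at hpos
    have : 4 * p ^ 3 * (3 * p - 2) = 0 := by linear_combination -hsq
    simp [hp] at this
    linarith
  · rintro rfl
    rw [Real.sqrt_eq_iff_mul_self_eq] <;> norm_num

def ket (x : Q3) : Q3 → ℂ := Pi.single x 1

lemma le_two_thirds_of_symExt_werner {p : ℝ} (h : SymExt (werner p)) : p ≤ 2 / 3 := by
  obtain ⟨τ, ⟨hτ, htr⟩, hAB, hAB'⟩ := h
  set q : (Q3 → ℂ) → ℂ := fun v => star v ⬝ᵥ τ *ᵥ v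
  have hq (v : Q3 → ℂ) : 0 ≤ q v := hτ.dotProduct_mulVec_nonneg v
  have hAB (x y : Q2) : ∑ c, τ (x.1, x.2, c) (y.1, y.2, c) = werner p x y := by rw [← hAB]; rfl
  have hAB' (x y : Q2) : ∑ b, τ (x.1, b, x.2) (y.1, b, y.2) = werner p x y := by rw [← hAB']; rfl
  -- the left-hand side is `tr ((I + X_{AB} + X_{AB'}) τ)`
  have key : q (ket (1,0,1) - ket (1,1,0)) + q (ket (0,1,0) - ket (0,0,1))
      + q (ket (0,0,0) - ket (1,0,1) - ket (1,1,0)) + q (ket (1,1,1) - ket (0,1,0) - ket (0,0,1))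
      + 3 * (q (ket (0,1,1)) + q (ket (1,0,0))) = ((2 - 3 * p : ℝ) : ℂ) := by
    linear_combination (norm := skip) htr + hAB (0,1) (0,1) + hAB (1,0) (1,0)
      + hAB' (0,1) (0,1) + hAB' (1,0) (1,0) - hAB (0,0) (1,1) - hAB (1,1) (0,0)
      - hAB' (0,0) (1,1) - hAB' (1,1) (0,0)
    simp only [q, ket, dotProduct, mulVec, Pi.star_apply, trace, diag, Fintype.sum_prod_type,
      Fin.sum_univ_two, werner_apply, Pi.sub_apply, Pi.single_apply]
    norm_num [Prod.ext_iff]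
    ring
  have h3 : (0 : ℂ) ≤ 3 := by norm_num
  have := key ▸ add_nonneg (add_nonneg (add_nonneg (add_nonneg (hq _) (hq _)) (hq _)) (hq _))
    (mul_nonneg h3 (add_nonneg (hq _) (hq _)))
  linarith [Complex.zero_le_real.mp this]

def wernerExtension (p : ℝ) : Matrix Q3 Q3 ℂ :=
  (((2 - 3 * p) / 16 : ℝ) : ℂ) • 1 +
    ((p / 8 : ℝ) : ℂ) • (proj ((2 : ℂ) • ket (0,0,0) + ket (1,0,1) + ket (1,1,0)) +
      proj ((2 : ℂ) • ket (1,1,1) + ket (0,1,0) + ket (0,0,1)))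

lemma isState3_wernerExtension {p : ℝ} (hp0 : 0 ≤ p) (hp : p ≤ 2 / 3) :
    IsState3 (wernerExtension p) := by
  refine ⟨.add (.smul .one (Complex.zero_le_real.mpr (by linarith)))
    (.smul (.add (posSemidef_vecMulVec_self_star _) (posSemidef_vecMulVec_self_star _))
      (Complex.zero_le_real.mpr (by linarith))), ?_⟩
  simp only [wernerExtension, trace, diag, Matrix.add_apply, Matrix.smul_apply,
    one_apply, proj, vecMulVec_apply, Pi.star_apply, ket, Pi.add_apply, Pi.smul_apply,
    Pi.single_apply, Fintype.sum_prod_type, Fin.sum_univ_two, smul_eq_mul]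
  norm_num [Prod.ext_iff]
  ring

lemma symExt_werner {p : ℝ} (hp0 : 0 ≤ p) (hp : p ≤ 2 / 3) : SymExt (werner p) := by
  refine ⟨wernerExtension p, isState3_wernerExtension hp0 hp, ?_, ?_⟩ <;>
  · ext ⟨a, b⟩ ⟨c, d⟩
    simp only [ptraceB3, ptraceB'3, wernerExtension, of_apply, Matrix.add_apply,
      Matrix.smul_apply, one_apply, proj, vecMulVec_apply, Pi.star_apply, ket, Pi.add_apply,
      Pi.smul_apply, Pi.single_apply, Fin.sum_univ_two, werner_apply, smul_eq_mul]
    fin_cases a <;> fin_cases b <;> fin_cases c <;> fin_cases d <;> norm_num [Prod.ext_iff] <;>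
      ring

/-- For the Werner state: tr(ρ_W(p)²) = tr((tr_B ρ_W(p))²) + 4√(det ρ_W(p)) iff p = 2/3,
and ρ_W(p) admits a symmetric extension iff p ≤ 2/3. -/
theorem werner_symmetric_extension (p : ℝ) (hp0 : 0 ≤ p) (hp1 : p ≤ 1) :
    (((werner p * werner p).trace).re =
        ((ptraceB2 (werner p) * ptraceB2 (werner p)).trace).re +
          4 * Real.sqrt (werner p).det.re ↔ p = 2 / 3) ∧
      (SymExt (werner p) ↔ p ≤ 2 / 3) := by
  refine ⟨?_, le_two_thirds_of_symExt_werner, symExt_werner hp0⟩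
  have hB : ((ptraceB2 (werner p) * ptraceB2 (werner p)).trace).re = 1 / 2 := by
    simp [ptraceB2_werner]
  have h16 : √((1 - p) ^ 3 * (1 + 3 * p) / 256) = √((1 - p) ^ 3 * (1 + 3 * p)) / 16 := by
    rw [Real.sqrt_div' _ (by norm_num), show (256 : ℝ) = 16 ^ 2 by norm_num,
      Real.sqrt_sq (by norm_num)]
  rw [← sqrt_eq_three_mul_sq_sub_one_iff hp0 hp1, trace_werner_mul_self, hB, det_werner]
  simp only [Complex.ofReal_re, h16]
  constructor <;> intro h <;> linarith
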